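/- With k = 1: let v = q + c0 u0 + c1 u1 + c2 u2, where q : ℝ² → ℝ is a polynomial of degree ≤ 2 and c0, c1, c2 ∈ ℝ. If v(vi) = 0 and the total derivative of v vanishes at vi for i = 0, 1, 2, then v(x) = 0 for all x ∈ T; equivalently q ≡ 0 and c0 = c1 = c2 = 0. That is, a function in U2(T) = P2(T) ⊕ span{u0, u1, u2} is uniquely determined by its values and gradients at the three vertices of T. -/

import Mathlib

noncomputable section

open Matrix MeasureTheory

abbrev Vec2 : Type := Fin 2 → ℝ

/-- Euclidean dot product on `ℝ²`. -/
def dot2 (a b : Vec2) : ℝ := a 0 * b 0 + a 1 * b 1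

/-- Partial derivative of `f` in the `i`-th coordinate direction. -/
def pd (i : Fin 2) (f : Vec2 → ℝ) (x : Vec2) : ℝ := fderiv ℝ f x (Pi.single i 1)

/-- The matrix `a bᵀ`. -/
def outer (a b : Vec2) : Matrix (Fin 2) (Fin 2) ℝ := fun i j => a i * b j

/-- `sym(a ⊗ b) = (a bᵀ + b aᵀ)/2`. -/
def symOuter (a b : Vec2) : Matrix (Fin 2) (Fin 2) ℝ := (1 / 2 : ℝ) • (outer a b + outer b a)

/-- The Airy operator (rotated Hessian)
`J(f) = [[∂²f/∂x₂², −∂²f/∂x₁∂x₂], [−∂²f/∂x₁∂x₂, ∂²f/∂x₁²]]`. -/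
def airy (f : Vec2 → ℝ) (x : Vec2) : Matrix (Fin 2) (Fin 2) ℝ :=
  !![pd 1 (pd 1 f) x, -(pd 0 (pd 1 f) x); -(pd 0 (pd 1 f) x), pd 0 (pd 0 f) x]

/-- `f` is the evaluation function of a real polynomial in two variables of total degree ≤ m. -/
def IsPolyDeg (m : ℕ) (f : Vec2 → ℝ) : Prop :=
  ∃ P : MvPolynomial (Fin 2) ℝ, P.totalDegree ≤ m ∧ ∀ x, f x = MvPolynomial.eval x P

/-- `f` is the evaluation function of a real polynomial in two variables. -/
def IsPolyFun (f : Vec2 → ℝ) : Prop :=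
  ∃ P : MvPolynomial (Fin 2) ℝ, ∀ x, f x = MvPolynomial.eval x P

/-- `λᵢᴿ = λᵢ − min(λ₀, λ₁, λ₂)`: hat function of vertex `vᵢ` on the barycentric refinement. -/
def lamR (lam : Fin 3 → Vec2 → ℝ) (i : Fin 3) (x : Vec2) : ℝ :=
  lam i x - min (lam 0 x) (min (lam 1 x) (lam 2 x))

/-- `x ∈ Ωⱼ`: the region where `λⱼ` is the strict minimum of the barycentric coordinates. -/
def inReg (lam : Fin 3 → Vec2 → ℝ) (j : Fin 3) (x : Vec2) : Prop :=
  ∀ i : Fin 3, i ≠ j → lam j x < lam i x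

/-- The branch formula of `ψᵢ` on `Ω_{i+2}`. -/
def psiA (lam : Fin 3 → Vec2 → ℝ) (tc : Fin 3 → Vec2) (k : ℕ) (i : Fin 3) (x : Vec2) :
    Matrix (Fin 2) (Fin 2) ℝ :=
  (2 * (lam i x - lam (i + 2) x) ^ k) • symOuter (tc i) (tc (i + 1)) -
    ((k : ℝ) * (lam i x - lam (i + 2) x) ^ (k - 1) * (lam (i + 1) x - lam (i + 2) x)) •
      outer (tc (i + 1)) (tc (i + 1))

/-- The branch formula of `ψᵢ` on `Ω_{i+1}`. -/
def psiB (lam : Fin 3 → Vec2 → ℝ) (tc : Fin 3 → Vec2) (k : ℕ) (i : Fin 3) (x : Vec2) :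
    Matrix (Fin 2) (Fin 2) ℝ :=
  -((2 * (lam i x - lam (i + 1) x) ^ k) • symOuter (tc i) (tc (i + 2))) +
    ((k : ℝ) * (lam i x - lam (i + 1) x) ^ (k - 1) * (lam (i + 2) x - lam (i + 1) x)) •
      outer (tc (i + 2)) (tc (i + 2))

open Classical in
/-- The piecewise enrichment stress `ψᵢ`. -/
def psiFun (lam : Fin 3 → Vec2 → ℝ) (tc : Fin 3 → Vec2) (k : ℕ) (i : Fin 3) (x : Vec2) :
    Matrix (Fin 2) (Fin 2) ℝ :=
  if inReg lam (i + 2) x then psiA lam tc k i x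
  else if inReg lam (i + 1) x then psiB lam tc k i x
  else 0

/-- The `Ωⱼ`-branch polynomial formula of `ψᵢ` (value used on the closed edge `eⱼ`). -/
def psiEdge (lam : Fin 3 → Vec2 → ℝ) (tc : Fin 3 → Vec2) (k : ℕ) (i j : Fin 3) (x : Vec2) :
    Matrix (Fin 2) (Fin 2) ℝ :=
  if j = i + 2 then psiA lam tc k i x
  else if j = i + 1 then psiB lam tc k i x
  else 0

/-- The Airy potential `vᵢ = (4|T|²/(9(k+1))) (λᵢᴿ)^{k+1} (λ_{i+2} − λ_{i+1})`. -/
def vEnrich (lam : Fin 3 → Vec2 → ℝ) (area : ℝ) (k : ℕ) (i : Fin 3) (x : Vec2) : ℝ :=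
  4 * area ^ 2 / (9 * (k + 1)) * (lamR lam i x) ^ (k + 1) * (lam (i + 2) x - lam (i + 1) x)

/-- `v_{i,i+1} = (C_T/(k+1))[(λᵢᴿ)^{k+1} − λᵢ^{k+1}](λ_{i+2} − λ_{i+1}) − C_T λᵢ^k λ_{i+1} λ_{i+2}`. -/
def vE1 (lam : Fin 3 → Vec2 → ℝ) (area : ℝ) (k : ℕ) (i : Fin 3) (x : Vec2) : ℝ :=
  4 * area ^ 2 / 9 / (k + 1) * ((lamR lam i x) ^ (k + 1) - (lam i x) ^ (k + 1)) *
      (lam (i + 2) x - lam (i + 1) x) -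
    4 * area ^ 2 / 9 * (lam i x) ^ k * lam (i + 1) x * lam (i + 2) x

/-- `v_{i,i+2} = (C_T/(k+1))[(λᵢᴿ)^{k+1} − λᵢ^{k+1}](λ_{i+2} − λ_{i+1}) + C_T λᵢ^k λ_{i+1} λ_{i+2}`. -/
def vE2 (lam : Fin 3 → Vec2 → ℝ) (area : ℝ) (k : ℕ) (i : Fin 3) (x : Vec2) : ℝ :=
  4 * area ^ 2 / 9 / (k + 1) * ((lamR lam i x) ^ (k + 1) - (lam i x) ^ (k + 1)) *
      (lam (i + 2) x - lam (i + 1) x) +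
    4 * area ^ 2 / 9 * (lam i x) ^ k * lam (i + 1) x * lam (i + 2) x

/-- `wᵢ = (1/(4 C_T c_{i,i})) (v_{i+1,i} − v_{i+2,i})`, with `k = 1`. -/
def wFun (lam : Fin 3 → Vec2 → ℝ) (g : Fin 3 → Vec2) (n : Fin 3 → Vec2) (area : ℝ)
    (i : Fin 3) (x : Vec2) : ℝ :=
  1 / (4 * (4 * area ^ 2 / 9) * dot2 (g i) (n i)) *
    (vE2 lam area 1 (i + 1) x - vE1 lam area 1 (i + 2) x)

/-- `sᵢ = λ_{i+1} λ_{i+2} (λ_{i+1} − λ_{i+2})`. -/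
def sFun (lam : Fin 3 → Vec2 → ℝ) (i : Fin 3) (x : Vec2) : ℝ :=
  lam (i + 1) x * lam (i + 2) x * (lam (i + 1) x - lam (i + 2) x)

/-- `uᵢ = sᵢ − 3(c_{i+1,i} − c_{i+2,i}) wᵢ − c_{i+1,i+1} w_{i+1} + c_{i+2,i+2} w_{i+2}`. -/
def uFun (lam : Fin 3 → Vec2 → ℝ) (g : Fin 3 → Vec2) (n : Fin 3 → Vec2) (area : ℝ)
    (i : Fin 3) (x : Vec2) : ℝ :=
  sFun lam i x - 3 * (dot2 (g (i + 1)) (n i) - dot2 (g (i + 2)) (n i)) * wFun lam g n area i x -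
    dot2 (g (i + 1)) (n (i + 1)) * wFun lam g n area (i + 1) x +
    dot2 (g (i + 2)) (n (i + 2)) * wFun lam g n area (i + 2) x

/-- The closed triangle `T = conv{v₀, v₁, v₂}`. -/
def Tset (v : Fin 3 → Vec2) : Set Vec2 := convexHull ℝ {v 0, v 1, v 2}

/-- The closed edge `eⱼ` of `T` opposite the vertex `vⱼ`. -/
def edgeSeg (v : Fin 3 → Vec2) (j : Fin 3) : Set Vec2 := segment ℝ (v (j + 1)) (v (j + 2))

/-- `det(v₁ − v₀, v₂ − v₀)`. -/
def detT (v : Fin 3 → Vec2) : ℝ :=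
  (v 1 0 - v 0 0) * (v 2 1 - v 0 1) - (v 1 1 - v 0 1) * (v 2 0 - v 0 0)

/-! The corrections `wᵢ` are combinations of `min(λ₀, λ₁, λ₂) · F`, with `F` continuous and
vanishing at the vertices, and of the bubble `λ₀λ₁λ₂`; both vanish to second order at every
vertex, so `uᵢ` has the same vertex values and gradients as the cubic `sᵢ`. Along the edge `eᵢ`,
the tangential derivatives of `q + Σ cₖ sₖ` at the two endpoints add up to
`2 (q(v_{i+2}) - q(v_{i+1})) + 2 cᵢ`, which forces `cᵢ = 0`. Then `∇q` is an affine map vanishing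
at three affinely independent points, so `∇q = 0` and `q = q(v₀) = 0`. -/

open Asymptotics Filter Topology

theorem isBigO_min_sub_min {α F : Type*} [Norm F] {l : Filter α} {k : α → F} {f g : α → ℝ}
    {a b : ℝ} (hf : (fun x => f x - a) =O[l] k) (hg : (fun x => g x - b) =O[l] k) :
    (fun x => min (f x) (g x) - min a b) =O[l] k := by
  refine (isBigO_of_le l fun x => ?_).trans (hf.norm_left.add hg.norm_left)
  simp only [Real.norm_eq_abs]
  calc |min (f x) (g x) - min a b| ≤ max |f x - a| |g x - b| := abs_min_sub_min_le_max _ _ _ _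
    _ ≤ |f x - a| + |g x - b| := max_le_add_of_nonneg (abs_nonneg _) (abs_nonneg _)
    _ ≤ |(|f x - a| + |g x - b|)| := le_abs_self _

theorem hasFDerivAt_mul_zero_of_isBigO {E : Type*} [NormedAddCommGroup E] [NormedSpace ℝ E]
    {m F : E → ℝ} {p : E} (hm : m =O[𝓝 p] fun x => x - p) (hF : ContinuousAt F p)
    (hF0 : F p = 0) : HasFDerivAt (fun x => m x * F x) (0 : E →L[ℝ] ℝ) p := by
  have hFo : F =o[𝓝 p] fun _ => (1 : ℝ) := by
    rw [isLittleO_one_iff, ← hF0]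
    exact hF
  refine .of_isLittleO ?_
  simpa [hF0] using isLittleO_norm_right.mp (by simpa using hm.norm_right.mul_isLittleO hFo)

def dot2L (a : Vec2) : Vec2 →L[ℝ] ℝ :=
  a 0 • ContinuousLinearMap.proj 0 + a 1 • ContinuousLinearMap.proj 1

@[simp]
theorem dot2L_apply (a x : Vec2) : dot2L a x = dot2 a x := by
  simp [dot2L, dot2]

theorem hasFDerivAt_dot2 (a x : Vec2) : HasFDerivAt (dot2 a) (dot2L a) x := by
  have h : dot2 a = dot2L a := funext fun y => (dot2L_apply a y).symm
  rw [h]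
  exact (dot2L a).hasFDerivAt

theorem eq_zero_of_dot2L_eq_zero {a : Vec2} (h : dot2L a = 0) : a = 0 := by
  have h0 := congr($h (Pi.single 0 1))
  have h1 := congr($h (Pi.single 1 1))
  simp [dot2] at h0 h1
  funext i
  fin_cases i <;> simp [h0, h1]

theorem eq_zero_of_dot2_sub_vertex {v : Fin 3 → Vec2} (hdet : detT v ≠ 0) {b : Vec2}
    (h₁ : dot2 b (v 1 - v 0) = 0) (h₂ : dot2 b (v 2 - v 0) = 0) : b = 0 := by
  simp only [dot2, Pi.sub_apply] at h₁ h₂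
  have hb₀ : b 0 * detT v = 0 := by
    unfold detT
    linear_combination (v 2 1 - v 0 1) * h₁ - (v 1 1 - v 0 1) * h₂
  have hb₁ : b 1 * detT v = 0 := by
    unfold detT
    linear_combination (v 1 0 - v 0 0) * h₂ - (v 2 0 - v 0 0) * h₁
  funext i
  fin_cases i
  · exact (mul_eq_zero.mp hb₀).resolve_right hdet
  · exact (mul_eq_zero.mp hb₁).resolve_right hdet

section Quadratic

variable (a : ℝ) (b : Vec2) (c₀₀ c₀₁ c₁₁ : ℝ)

def quad (x : Vec2) : ℝ := a + dot2 b x + c₀₀ * x 0 ^ 2 + c₀₁ * (x 0 * x 1) + c₁₁ * x 1 ^ 2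

def quadGrad (x : Vec2) : Vec2 :=
  ![b 0 + 2 * c₀₀ * x 0 + c₀₁ * x 1, b 1 + c₀₁ * x 0 + 2 * c₁₁ * x 1]

theorem quad_add (a' : ℝ) (b' : Vec2) (c₀₀' c₀₁' c₁₁' : ℝ) :
    quad a b c₀₀ c₀₁ c₁₁ + quad a' b' c₀₀' c₀₁' c₁₁' =
      quad (a + a') (b + b') (c₀₀ + c₀₀') (c₀₁ + c₀₁') (c₁₁ + c₁₁') := by
  funext x
  simp only [quad, dot2, Pi.add_apply]
  ring

theorem hasFDerivAt_quad (x : Vec2) :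
    HasFDerivAt (quad a b c₀₀ c₀₁ c₁₁) (dot2L (quadGrad b c₀₀ c₀₁ c₁₁ x)) x := by
  have h₀ : HasFDerivAt (fun y : Vec2 => y 0) (ContinuousLinearMap.proj (R := ℝ) 0) x :=
    hasFDerivAt_apply 0 x
  have h₁ : HasFDerivAt (fun y : Vec2 => y 1) (ContinuousLinearMap.proj (R := ℝ) 1) x :=
    hasFDerivAt_apply 1 x
  refine ((((((hasFDerivAt_const a x).add (hasFDerivAt_dot2 b x)).add
    ((h₀.pow 2).const_mul c₀₀)).add ((h₀.mul h₁).const_mul c₀₁)).add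
    ((h₁.pow 2).const_mul c₁₁)).congr_fderiv ?_)
  ext y
  simp [quadGrad, dot2]
  ring

theorem dot2_quadGrad_add_dot2_quadGrad (x y : Vec2) :
    dot2 (quadGrad b c₀₀ c₀₁ c₁₁ x) (y - x) + dot2 (quadGrad b c₀₀ c₀₁ c₁₁ y) (y - x) =
      2 * (quad a b c₀₀ c₀₁ c₁₁ y - quad a b c₀₀ c₀₁ c₁₁ x) := by
  simp only [quad, quadGrad, dot2, Pi.sub_apply, Matrix.cons_val_zero, Matrix.cons_val_one]
  ring

theorem quad_eq_zero_of_vertex {v : Fin 3 → Vec2} (hdet : detT v ≠ 0)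
    (hval : ∀ j, quad a b c₀₀ c₀₁ c₁₁ (v j) = 0) (hgrad : ∀ j, quadGrad b c₀₀ c₀₁ c₁₁ (v j) = 0)
    (x : Vec2) : quad a b c₀₀ c₀₁ c₁₁ x = 0 := by
  have hrow : ∀ (k : Fin 2) (j : Fin 3),
      dot2 (![![2 * c₀₀, c₀₁], ![c₀₁, 2 * c₁₁]] k) (v j - v 0) = 0 := by
    intro k j
    have hj := congrFun (hgrad j) k
    have h₀ := congrFun (hgrad 0) k
    fin_cases k <;> simp [quadGrad, dot2] at hj h₀ ⊢ <;> linear_combination hj - h₀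
  have hHess : ∀ k, ![![2 * c₀₀, c₀₁], ![c₀₁, 2 * c₁₁]] k = 0 :=
    fun k => eq_zero_of_dot2_sub_vertex hdet (hrow k 1) (hrow k 2)
  have h₀₀ : c₀₀ = 0 := by simpa using congrFun (hHess 0) 0
  have h₀₁ : c₀₁ = 0 := by simpa using congrFun (hHess 0) 1
  have h₁₁ : c₁₁ = 0 := by simpa using congrFun (hHess 1) 1
  subst h₀₀ h₀₁ h₁₁
  have hb : b = 0 := by
    funext k
    fin_cases k
    · simpa [quadGrad] using congrFun (hgrad 0) 0
    · simpa [quadGrad] using congrFun (hgrad 0) 1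
  subst hb
  have ha : a = 0 := by simpa [quad, dot2] using hval 0
  simp [quad, dot2, ha]

end Quadratic

theorem IsPolyDeg.exists_quad {q : Vec2 → ℝ} (hq : IsPolyDeg 2 q) :
    ∃ a b c₀₀ c₀₁ c₁₁, q = quad a b c₀₀ c₀₁ c₁₁ := by
  obtain ⟨P, hdeg, hP⟩ := hq
  have hsum : q = ∑ d ∈ P.support, fun x : Vec2 => P.coeff d * (x 0 ^ d 0 * x 1 ^ d 1) := by
    funext x
    simp [hP, MvPolynomial.eval_eq', Fin.prod_univ_two]
  rw [hsum]
  refine Finset.sum_induction _ (fun f => ∃ a b c₀₀ c₀₁ c₁₁, f = quad a b c₀₀ c₀₁ c₁₁) ?_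
    ⟨0, 0, 0, 0, 0, by funext x; simp [quad, dot2]⟩ fun d hd => ?_
  · rintro _ _ ⟨a, b, c₀₀, c₀₁, c₁₁, rfl⟩ ⟨a', b', c₀₀', c₀₁', c₁₁', rfl⟩
    exact ⟨_, _, _, _, _, quad_add ..⟩
  have hd2 : d 0 + d 1 ≤ 2 := by
    simpa [Finsupp.sum_fintype, Fin.sum_univ_two] using (MvPolynomial.le_totalDegree hd).trans hdeg
  generalize P.coeff d = e
  generalize d 0 = m, d 1 = k at hd2 ⊢
  have hm : m ≤ 2 := by omega
  have hk : k ≤ 2 := by omega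
  interval_cases m <;> interval_cases k <;> try omega
  · exact ⟨e, 0, 0, 0, 0, by funext x; simp [quad, dot2]⟩
  · exact ⟨0, ![0, e], 0, 0, 0, by funext x; simp [quad, dot2]⟩
  · exact ⟨0, 0, 0, 0, e, by funext x; simp [quad, dot2]⟩
  · exact ⟨0, ![e, 0], 0, 0, 0, by funext x; simp [quad, dot2]⟩
  · exact ⟨0, 0, 0, e, 0, by funext x; simp [quad, dot2]⟩
  · exact ⟨0, 0, e, 0, 0, by funext x; simp [quad, dot2]⟩

section Barycentric

variable {v : Fin 3 → Vec2} {lam : Fin 3 → Vec2 → ℝ} {g : Fin 3 → Vec2} {cst : Fin 3 → ℝ}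

theorem hasFDerivAt_lam (hlam : ∀ i x, lam i x = dot2 (g i) x + cst i) (i : Fin 3) (x : Vec2) :
    HasFDerivAt (lam i) (dot2L (g i)) x := by
  rw [show lam i = fun y => dot2 (g i) y + cst i from funext (hlam i)]
  exact (hasFDerivAt_dot2 (g i) x).add_const (cst i)

theorem continuous_lam (hlam : ∀ i x, lam i x = dot2 (g i) x + cst i) (i : Fin 3) :
    Continuous (lam i) :=
  continuous_iff_continuousAt.2 fun x => (hasFDerivAt_lam hlam i x).continuousAt

theorem dot2_sub_vertex (hlam : ∀ i x, lam i x = dot2 (g i) x + cst i) (i a b : Fin 3) :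
    dot2 (g i) (v a - v b) = lam i (v a) - lam i (v b) := by
  simp only [hlam, dot2, Pi.sub_apply]
  ring

theorem detT_ne_zero (hlam : ∀ i x, lam i x = dot2 (g i) x + cst i)
    (hdelta : ∀ i j, lam i (v j) = if i = j then 1 else 0) : detT v ≠ 0 := by
  have hd : ∀ i a, dot2 (g i) (v a - v 0) = (if i = a then 1 else 0) - if i = 0 then 1 else 0 :=
    fun i a => by rw [dot2_sub_vertex hlam, hdelta, hdelta]
  have h11 := hd 1 1
  have h21 := hd 2 1
  have h22 := hd 2 2
  simp only [dot2, Pi.sub_apply, Fin.reduceEq, if_true, if_false] at h11 h21 h22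
  intro h
  have : (g 1 0 * g 2 1 - g 1 1 * g 2 0) * detT v = 1 := by
    unfold detT
    linear_combination (g 2 0 * (v 2 0 - v 0 0) + g 2 1 * (v 2 1 - v 0 1)) * h11 + h22 -
      (g 1 0 * (v 2 0 - v 0 0) + g 1 1 * (v 2 1 - v 0 1)) * h21
  simp [h] at this

theorem lam_vertex_mul_self (hdelta : ∀ i j, lam i (v j) = if i = j then 1 else 0) (a j : Fin 3) :
    lam a (v j) * lam a (v j) = lam a (v j) := by
  rw [hdelta]
  split_ifs <;> norm_num

theorem lam_vertex_mul_of_ne (hdelta : ∀ i j, lam i (v j) = if i = j then 1 else 0) {a b : Fin 3}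
    (hab : a ≠ b) (j : Fin 3) : lam a (v j) * lam b (v j) = 0 := by
  rw [hdelta, hdelta]
  split_ifs <;> simp_all

def lamMin (lam : Fin 3 → Vec2 → ℝ) (x : Vec2) : ℝ := min (lam 0 x) (min (lam 1 x) (lam 2 x))

def bubble (lam : Fin 3 → Vec2 → ℝ) (x : Vec2) : ℝ := lam 0 x * lam 1 x * lam 2 x

def wFactor (lam : Fin 3 → Vec2 → ℝ) (r : Fin 3) (x : Vec2) : ℝ :=
  (lamMin lam x - 2 * lam (r + 1) x) * (lam r x - lam (r + 2) x) +
    (lamMin lam x - 2 * lam (r + 2) x) * (lam r x - lam (r + 1) x)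

theorem wFun_eq (n : Fin 3 → Vec2) (area : ℝ) (r : Fin 3) (x : Vec2) :
    wFun lam g n area r x =
      1 / (4 * (4 * area ^ 2 / 9) * dot2 (g r) (n r)) * (4 * area ^ 2 / 9 / 2) *
          (lamMin lam x * wFactor lam r x) +
        1 / (4 * (4 * area ^ 2 / 9) * dot2 (g r) (n r)) * (2 * (4 * area ^ 2 / 9)) *
          bubble lam x := by
  simp only [wFun, vE1, vE2, lamR, lamMin, wFactor, bubble, add_assoc, Fin.reduceAdd, add_zero]
  fin_cases r <;>
  · simp only [Fin.zero_eta, Fin.mk_one, Fin.reduceFinMk, Fin.reduceAdd, Fin.isValue]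
    push_cast
    ring

theorem lamMin_vertex (hdelta : ∀ i j, lam i (v j) = if i = j then 1 else 0) (j : Fin 3) :
    lamMin lam (v j) = 0 := by
  fin_cases j <;> simp [lamMin, hdelta]

theorem isBigO_lamMin_vertex (hlam : ∀ i x, lam i x = dot2 (g i) x + cst i)
    (hdelta : ∀ i j, lam i (v j) = if i = j then 1 else 0) (j : Fin 3) :
    lamMin lam =O[𝓝 (v j)] fun x => x - v j := by
  have h := isBigO_min_sub_min (hasFDerivAt_lam hlam 0 (v j)).isBigO_sub
    (isBigO_min_sub_min (hasFDerivAt_lam hlam 1 (v j)).isBigO_sub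
      (hasFDerivAt_lam hlam 2 (v j)).isBigO_sub)
  have h₀ := lamMin_vertex hdelta j
  unfold lamMin at h₀ ⊢
  simpa [h₀] using h

theorem wFactor_vertex (hdelta : ∀ i j, lam i (v j) = if i = j then 1 else 0) (r j : Fin 3) :
    wFactor lam r (v j) = 0 := by
  have h₁ := lam_vertex_mul_of_ne hdelta (by fin_cases r <;> decide : r + 1 ≠ r) j
  have h₂ := lam_vertex_mul_of_ne hdelta (by fin_cases r <;> decide : r + 1 ≠ r + 2) j
  have h₃ := lam_vertex_mul_of_ne hdelta (by fin_cases r <;> decide : r + 2 ≠ r) j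
  rw [wFactor, lamMin_vertex hdelta]
  linear_combination -2 * h₁ + 4 * h₂ - 2 * h₃

theorem hasFDerivAt_bubble_vertex (hlam : ∀ i x, lam i x = dot2 (g i) x + cst i)
    (hdelta : ∀ i j, lam i (v j) = if i = j then 1 else 0) (j : Fin 3) :
    HasFDerivAt (bubble lam) (0 : Vec2 →L[ℝ] ℝ) (v j) := by
  have h := ((hasFDerivAt_lam hlam 0 (v j)).mul (hasFDerivAt_lam hlam 1 (v j))).mul
    (hasFDerivAt_lam hlam 2 (v j))
  refine h.congr_fderiv ?_
  ext y
  have h₀₁ := lam_vertex_mul_of_ne hdelta (show (0 : Fin 3) ≠ 1 by decide) j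
  have h₀₂ := lam_vertex_mul_of_ne hdelta (show (0 : Fin 3) ≠ 2 by decide) j
  have h₁₂ := lam_vertex_mul_of_ne hdelta (show (1 : Fin 3) ≠ 2 by decide) j
  simp only [Pi.mul_apply, smul_add, _root_.add_apply, _root_.smul_apply, dot2L_apply,
    smul_eq_mul, _root_.zero_apply]
  linear_combination dot2 (g 2) y * h₀₁ + dot2 (g 1) y * h₀₂ + dot2 (g 0) y * h₁₂

theorem wFun_vertex (hdelta : ∀ i j, lam i (v j) = if i = j then 1 else 0)
    (n : Fin 3 → Vec2) (area : ℝ) (r j : Fin 3) : wFun lam g n area r (v j) = 0 := by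
  rw [wFun_eq, lamMin_vertex hdelta, bubble,
    lam_vertex_mul_of_ne hdelta (show (0 : Fin 3) ≠ 1 by decide)]
  ring

theorem hasFDerivAt_wFun_vertex (hlam : ∀ i x, lam i x = dot2 (g i) x + cst i)
    (hdelta : ∀ i j, lam i (v j) = if i = j then 1 else 0) (n : Fin 3 → Vec2) (area : ℝ)
    (r j : Fin 3) : HasFDerivAt (wFun lam g n area r) (0 : Vec2 →L[ℝ] ℝ) (v j) := by
  have hcont : Continuous (wFactor lam r) := by
    have := continuous_lam hlam
    unfold wFactor lamMin
    fun_prop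
  rw [show wFun lam g n area r = _ from funext (wFun_eq n area r)]
  refine (((hasFDerivAt_mul_zero_of_isBigO (isBigO_lamMin_vertex hlam hdelta j)
    hcont.continuousAt (wFactor_vertex hdelta r j)).const_mul _).add
    ((hasFDerivAt_bubble_vertex hlam hdelta j).const_mul _)).congr_fderiv ?_
  simp

theorem sFun_vertex (hdelta : ∀ i j, lam i (v j) = if i = j then 1 else 0) (i j : Fin 3) :
    sFun lam i (v j) = 0 := by
  rw [sFun, lam_vertex_mul_of_ne hdelta (by fin_cases i <;> decide : i + 1 ≠ i + 2), zero_mul]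

/-- At a vertex `λ_{i+1}, λ_{i+2} ∈ {0, 1}` and `λ_{i+1} λ_{i+2} = 0`, which collapses the product
rule for `sᵢ = λ_{i+1} λ_{i+2} (λ_{i+1} - λ_{i+2})` to this. -/
def sDerivVertex (v : Fin 3 → Vec2) (lam : Fin 3 → Vec2 → ℝ) (g : Fin 3 → Vec2) (i j : Fin 3) :
    Vec2 →L[ℝ] ℝ :=
  lam (i + 1) (v j) • dot2L (g (i + 2)) - lam (i + 2) (v j) • dot2L (g (i + 1))

theorem hasFDerivAt_sFun_vertex (hlam : ∀ i x, lam i x = dot2 (g i) x + cst i)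
    (hdelta : ∀ i j, lam i (v j) = if i = j then 1 else 0) (i j : Fin 3) :
    HasFDerivAt (sFun lam i) (sDerivVertex v lam g i j) (v j) := by
  have h := ((hasFDerivAt_lam hlam (i + 1) (v j)).mul (hasFDerivAt_lam hlam (i + 2) (v j))).mul
    ((hasFDerivAt_lam hlam (i + 1) (v j)).sub (hasFDerivAt_lam hlam (i + 2) (v j)))
  refine h.congr_fderiv ?_
  ext y
  have hab := lam_vertex_mul_of_ne hdelta (by fin_cases i <;> decide : i + 1 ≠ i + 2) j
  have ha := lam_vertex_mul_self hdelta (i + 1) j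
  have hb := lam_vertex_mul_self hdelta (i + 2) j
  simp only [sDerivVertex, Pi.mul_apply, Pi.sub_apply, smul_add, _root_.add_apply,
    _root_.sub_apply, _root_.smul_apply, dot2L_apply, smul_eq_mul]
  linear_combination 2 * (dot2 (g (i + 1)) y - dot2 (g (i + 2)) y) * hab +
    dot2 (g (i + 2)) y * ha - dot2 (g (i + 1)) y * hb

theorem uFun_vertex (hdelta : ∀ i j, lam i (v j) = if i = j then 1 else 0)
    (n : Fin 3 → Vec2) (area : ℝ) (i j : Fin 3) : uFun lam g n area i (v j) = 0 := by
  simp only [uFun, sFun_vertex hdelta, wFun_vertex hdelta]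
  ring

theorem hasFDerivAt_uFun_vertex (hlam : ∀ i x, lam i x = dot2 (g i) x + cst i)
    (hdelta : ∀ i j, lam i (v j) = if i = j then 1 else 0) (n : Fin 3 → Vec2) (area : ℝ)
    (i j : Fin 3) : HasFDerivAt (uFun lam g n area i) (sDerivVertex v lam g i j) (v j) := by
  have hw := hasFDerivAt_wFun_vertex hlam hdelta n area
  refine ((((hasFDerivAt_sFun_vertex hlam hdelta i j).sub ((hw i j).const_mul _)).sub
    ((hw (i + 1) j).const_mul _)).add ((hw (i + 2) j).const_mul _)).congr_fderiv ?_
  simp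

end Barycentric

theorem coeff_eq_zero_of_vertex_derivs {v : Fin 3 → Vec2} {lam : Fin 3 → Vec2 → ℝ}
    {g : Fin 3 → Vec2} {cst : Fin 3 → ℝ} (hlam : ∀ i x, lam i x = dot2 (g i) x + cst i)
    (hdelta : ∀ i j, lam i (v j) = if i = j then 1 else 0) {a : ℝ} {b : Vec2} {c₀₀ c₀₁ c₁₁ : ℝ}
    (hval : ∀ j, quad a b c₀₀ c₀₁ c₁₁ (v j) = 0) {c : Fin 3 → ℝ}
    (hD : ∀ j, dot2L (quadGrad b c₀₀ c₀₁ c₁₁ (v j)) + ∑ k, c k • sDerivVertex v lam g k j = 0)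
    (i : Fin 3) : c i = 0 := by
  have hquad := dot2_quadGrad_add_dot2_quadGrad a b c₀₀ c₀₁ c₁₁ (v (i + 1)) (v (i + 2))
  rw [hval, hval, sub_zero, mul_zero] at hquad
  have h₁ := congr($(hD (i + 1)) (v (i + 2) - v (i + 1)))
  have h₂ := congr($(hD (i + 2)) (v (i + 2) - v (i + 1)))
  simp only [Fin.sum_univ_three, sDerivVertex, _root_.add_apply, _root_.sub_apply,
    _root_.smul_apply, dot2L_apply, dot2_sub_vertex hlam, hdelta, smul_eq_mul,
    _root_.zero_apply] at h₁ h₂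
  fin_cases i <;> simp at hquad h₁ h₂ ⊢ <;> linarith

theorem U2_unisolvence_general
    (v : Fin 3 → Vec2)
    (lam : Fin 3 → Vec2 → ℝ) (g : Fin 3 → Vec2) (cst : Fin 3 → ℝ)
    (hlam : ∀ i x, lam i x = dot2 (g i) x + cst i)
    (hdelta : ∀ i j, lam i (v j) = if i = j then 1 else 0)
    (area : ℝ)
    (n : Fin 3 → Vec2)
    (q : Vec2 → ℝ) (hq : IsPolyDeg 2 q) (c : Fin 3 → ℝ)
    (vf : Vec2 → ℝ)
    (hvf : ∀ x, vf x = q x + c 0 * uFun lam g n area 0 x + c 1 * uFun lam g n area 1 x +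
      c 2 * uFun lam g n area 2 x)
    (hval : ∀ i : Fin 3, vf (v i) = 0)
    (hgrad : ∀ i : Fin 3, fderiv ℝ vf (v i) = 0) :
    (∀ x ∈ Tset v, vf x = 0) ∧ (∀ x, q x = 0) ∧ ∀ i, c i = 0 := by
  obtain ⟨a, b, c₀₀, c₀₁, c₁₁, rfl⟩ := hq.exists_quad
  obtain rfl : vf = _ := funext hvf
  have hq₀ : ∀ j, quad a b c₀₀ c₀₁ c₁₁ (v j) = 0 := fun j => by
    simpa [uFun_vertex hdelta] using hval j
  have hD : ∀ j, dot2L (quadGrad b c₀₀ c₀₁ c₁₁ (v j)) + ∑ k, c k • sDerivVertex v lam g k j = 0 :=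
    fun j => by
      have hu := hasFDerivAt_uFun_vertex hlam hdelta n area (j := j)
      rw [← hgrad j]
      refine (HasFDerivAt.fderiv ?_).symm
      refine ((((hasFDerivAt_quad a b c₀₀ c₀₁ c₁₁ (v j)).add ((hu 0).const_mul (c 0))).add
        ((hu 1).const_mul (c 1))).add ((hu 2).const_mul (c 2))).congr_fderiv ?_
      rw [Fin.sum_univ_three]
      abel
  have hc : ∀ i, c i = 0 := coeff_eq_zero_of_vertex_derivs hlam hdelta hq₀ hD
  have hgrad₀ : ∀ j, quadGrad b c₀₀ c₀₁ c₁₁ (v j) = 0 := fun j =>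
    eq_zero_of_dot2L_eq_zero (by simpa [hc] using hD j)
  have hq : ∀ x, quad a b c₀₀ c₀₁ c₁₁ x = 0 :=
    quad_eq_zero_of_vertex a b c₀₀ c₀₁ c₁₁ (detT_ne_zero hlam hdelta) hq₀ hgrad₀
  exact ⟨fun x _ => by simp [hq, hc], hq, hc⟩

/-- a function `v = q + c₀u₀ + c₁u₁ + c₂u₂` in
`U₂(T) = P₂(T) ⊕ span{u₀,u₁,u₂}` whose values and total derivatives vanish at the three
vertices vanishes on `T`; equivalently `q ≡ 0` and `c₀ = c₁ = c₂ = 0`. -/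
theorem U2_unisolvence
    (v : Fin 3 → Vec2) (hv : AffineIndependent ℝ v)
    (lam : Fin 3 → Vec2 → ℝ) (g : Fin 3 → Vec2) (cst : Fin 3 → ℝ)
    (hlam : ∀ i x, lam i x = dot2 (g i) x + cst i)
    (hdelta : ∀ i j, lam i (v j) = if i = j then 1 else 0)
    (area : ℝ) (harea : area = |detT v| / 2)
    (n : Fin 3 → Vec2) (hn1 : ∀ j, dot2 (n j) (n j) = 1)
    (hn2 : ∀ j, dot2 (n j) (v (j + 2) - v (j + 1)) = 0)
    (hcc : ∀ j, dot2 (g j) (n j) ≠ 0)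
    (q : Vec2 → ℝ) (hq : IsPolyDeg 2 q) (c : Fin 3 → ℝ)
    (vf : Vec2 → ℝ)
    (hvf : ∀ x, vf x = q x + c 0 * uFun lam g n area 0 x + c 1 * uFun lam g n area 1 x +
      c 2 * uFun lam g n area 2 x)
    (hval : ∀ i : Fin 3, vf (v i) = 0)
    (hgrad : ∀ i : Fin 3, fderiv ℝ vf (v i) = 0) :
    (∀ x ∈ Tset v, vf x = 0) ∧ (∀ x, q x = 0) ∧ ∀ i, c i = 0 :=
  U2_unisolvence_general v lam g cst hlam hdelta area n q hq c vf hvf hval hgrad
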